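/- arXiv:2410.21985 — 3 statements merged into one kernel-verified Lean document; each statement's English description precedes it below -/
import Mathlib

section
/- Let a, b ∈ ℂ and let ε ∈ (0, 1/4). Then there exists a constant C > 0 (depending only on a, b, ε) such that for every n ∈ ℤ_{≥0} and every z ∈ ℂ with |z + b − j| ≥ ε for all j ∈ {1, …, n}, one has ∏_{j=1}^{n} |(−a + j − z)/(−b + j − z)| ≤ C (n+1)^{2|a−b|}. -/
/-!
Write `w_j = -b + j - z`, so that the `j`-th factor is `‖(w_j + (b - a)) / w_j‖`, which is at
most `1 + ‖a - b‖ / ‖w_j‖ ≤ exp (‖a - b‖ / ‖w_j‖)`. Since `‖w_j‖ ≥ max ε |j - r|` with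
`r = re (z + b)`, it remains to bound `∑_{j ≤ n} 1 / max ε |j - r|` by
`1/ε + 2 (1 + log (n + 1))`. Of the two ends of the integer interval `[0, n]`, one lies at
distance at least `n / 2` from `r`; removing it costs at most `2 / n`, and iterating leaves one
point costing at most `1/ε`, giving `1/ε + 2 H_n`.
-/

open Complex Finset

lemma norm_add_div_le_exp {𝕜 : Type*} [NormedField 𝕜] (w c : 𝕜) :
    ‖(w + c) / w‖ ≤ Real.exp (‖c‖ / ‖w‖) := by
  rcases eq_or_ne w 0 with rfl | hw
  · simp
  calc ‖(w + c) / w‖ = ‖w + c‖ / ‖w‖ := norm_div _ _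
    _ ≤ (‖w‖ + ‖c‖) / ‖w‖ := by gcongr; exact norm_add_le _ _
    _ = ‖c‖ / ‖w‖ + 1 := by field_simp; ring
    _ ≤ Real.exp (‖c‖ / ‖w‖) := Real.add_one_le_exp _

lemma inv_max_abs_le_two_mul_inv {ε x t : ℝ} (ht : 0 < t) (h : t / 2 ≤ |x|) :
    (max ε |x|)⁻¹ ≤ 2 * t⁻¹ := by
  calc (max ε |x|)⁻¹ ≤ (t / 2)⁻¹ := inv_anti₀ (by positivity) (h.trans (le_max_right _ _))
    _ = 2 * t⁻¹ := by field_simp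

lemma sum_range_inv_max_abs_sub_le {ε : ℝ} (hε : 0 < ε) (n : ℕ) (r : ℝ) :
    ∑ i ∈ range (n + 1), (max ε |(i : ℝ) - r|)⁻¹ ≤ ε⁻¹ + 2 * harmonic n := by
  induction n generalizing r with
  | zero => simpa using inv_anti₀ hε (le_max_left ε |r|)
  | succ n ih =>
    rw [harmonic_succ]
    push_cast
    have hends : (n : ℝ) + 1 ≤ |(n + 1 : ℝ) - r| + |(0 : ℝ) - r| := by
      simpa [abs_of_pos (by positivity : (0 : ℝ) < n + 1), abs_sub_comm r]
        using abs_sub_le (n + 1 : ℝ) r 0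
    rcases le_total (((n : ℝ) + 1) / 2) |(n + 1 : ℝ) - r| with hfar | hclose
    · rw [sum_range_succ]
      have := inv_max_abs_le_two_mul_inv (ε := ε) (by positivity) hfar
      push_cast
      linarith [ih r]
    · rw [sum_range_succ']
      have hshift (i : ℕ) : ((i + 1 : ℕ) : ℝ) - r = (i : ℝ) - (r - 1) := by push_cast; ring
      simp only [hshift]
      have hfar : ((n : ℝ) + 1) / 2 ≤ |(0 : ℝ) - r| := by linarith
      have := inv_max_abs_le_two_mul_inv (ε := ε) (by positivity) hfar
      push_cast
      linarith [ih (r - 1)]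

lemma sum_Icc_inv_max_abs_sub_le {ε : ℝ} (hε : 0 < ε) (n : ℕ) (r : ℝ) :
    ∑ j ∈ Icc 1 n, (max ε |(j : ℝ) - r|)⁻¹ ≤ ε⁻¹ + 2 * (1 + Real.log ((n : ℝ) + 1)) := by
  have hsub : Icc 1 n ⊆ range (n + 1) := fun j hj => by simp at hj ⊢; omega
  have hlog : Real.log n ≤ Real.log ((n : ℝ) + 1) := by
    rcases n.eq_zero_or_pos with rfl | hn
    · simp
    · exact Real.log_le_log (by exact_mod_cast hn) (by linarith)
  calc ∑ j ∈ Icc 1 n, (max ε |(j : ℝ) - r|)⁻¹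
      ≤ ∑ i ∈ range (n + 1), (max ε |(i : ℝ) - r|)⁻¹ :=
        sum_le_sum_of_subset_of_nonneg hsub fun _ _ _ =>
          inv_nonneg.2 (hε.le.trans (le_max_left _ _))
    _ ≤ ε⁻¹ + 2 * harmonic n := sum_range_inv_max_abs_sub_le hε n r
    _ ≤ ε⁻¹ + 2 * (1 + Real.log ((n : ℝ) + 1)) := by
        linarith [harmonic_le_one_add_log n]

lemma norm_sub_div_sub_le_exp (a : ℂ) {b z : ℂ} {ε x : ℝ} (hε : 0 < ε)
    (h : ε ≤ ‖z + b - x‖) :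
    ‖(-a + x - z) / (-b + x - z)‖ ≤
      Real.exp (‖a - b‖ * (max ε |x - (z + b).re|)⁻¹) := by
  have hw : ‖-b + x - z‖ = ‖z + b - x‖ := by rw [← norm_neg]; ring_nf
  have hre : |x - (z + b).re| ≤ ‖z + b - x‖ := by
    simpa [abs_sub_comm] using abs_re_le_norm (z + b - x)
  calc ‖(-a + x - z) / (-b + x - z)‖
        = ‖(-b + x - z + (b - a)) / (-b + x - z)‖ := by ring_nf
    _ ≤ Real.exp (‖b - a‖ / ‖-b + x - z‖) := norm_add_div_le_exp _ _
    _ ≤ Real.exp (‖a - b‖ * (max ε |x - (z + b).re|)⁻¹) := by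
      rw [norm_sub_rev, hw, div_eq_mul_inv]
      gcongr
      exact max_le h hre

theorem stmt5_general (a b : ℂ) (ε : ℝ) (hε0 : 0 < ε) :
    ∃ C > (0 : ℝ), ∀ n : ℕ, ∀ z : ℂ,
      (∀ j ∈ Finset.Icc 1 n, ε ≤ ‖z + b - (j : ℂ)‖) →
      (∏ j ∈ Finset.Icc 1 n, ‖(-a + (j : ℂ) - z) / (-b + (j : ℂ) - z)‖) ≤
        C * ((n : ℝ) + 1) ^ (2 * ‖a - b‖) := by
  set d := ‖a - b‖
  refine ⟨Real.exp (d * (ε⁻¹ + 2)), Real.exp_pos _, fun n z hz => ?_⟩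
  set r := (z + b).re
  have hfactor : ∀ j ∈ Icc 1 n, ‖(-a + (j : ℂ) - z) / (-b + (j : ℂ) - z)‖ ≤
      Real.exp (d * (max ε |(j : ℝ) - r|)⁻¹) := fun j hj => by
    exact_mod_cast norm_sub_div_sub_le_exp a (x := j) hε0 (by exact_mod_cast hz j hj)
  have hn : (0 : ℝ) < (n : ℝ) + 1 := by positivity
  calc (∏ j ∈ Icc 1 n, ‖(-a + (j : ℂ) - z) / (-b + (j : ℂ) - z)‖)
      ≤ ∏ j ∈ Icc 1 n, Real.exp (d * (max ε |(j : ℝ) - r|)⁻¹) :=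
        prod_le_prod (fun _ _ => norm_nonneg _) hfactor
    _ = Real.exp (d * ∑ j ∈ Icc 1 n, (max ε |(j : ℝ) - r|)⁻¹) := by
        rw [← Real.exp_sum, mul_sum]
    _ ≤ Real.exp (d * (ε⁻¹ + 2 * (1 + Real.log ((n : ℝ) + 1)))) := by
        gcongr
        exact sum_Icc_inv_max_abs_sub_le hε0 n r
    _ = Real.exp (d * (ε⁻¹ + 2)) * ((n : ℝ) + 1) ^ (2 * d) := by
        rw [Real.rpow_def_of_pos hn, ← Real.exp_add]
        ring_nf

theorem stmt5 (a b : ℂ) (ε : ℝ) (hε0 : 0 < ε) (hε4 : ε < 1 / 4) :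
    ∃ C > (0 : ℝ), ∀ n : ℕ, ∀ z : ℂ,
      (∀ j ∈ Finset.Icc 1 n, ε ≤ ‖z + b - (j : ℂ)‖) →
      (∏ j ∈ Finset.Icc 1 n, ‖(-a + (j : ℂ) - z) / (-b + (j : ℂ) - z)‖) ≤
        C * ((n : ℝ) + 1) ^ (2 * ‖a - b‖) :=
  stmt5_general a b ε hε0
end

section
/- Assume a, b ∈ ℂ and c, d ∈ ℂ∖ℤ_{≤0}, and set p := Re(a−c) + max{0, Re(b−d)}. Then there exist constants K, z₀ > 0 such that for every n ∈ ℤ_{≥0} and every real z ≥ z₀, one has |₂F₂[a, b+n; c, d+n; z]| ≤ K (n+1)^{2|b−d|} z^{p} e^{z}. -/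
open Complex

/-- Pochhammer symbol `(a)_n = a(a+1)⋯(a+n-1)`. -/
noncomputable def poch (a : ℂ) (n : ℕ) : ℂ := ∏ j ∈ Finset.range n, (a + j)

/-- Generalized hypergeometric function `₂F₂[a1,a2;b1,b2;z]`. -/
noncomputable def F22 (a1 a2 b1 b2 z : ℂ) : ℂ :=
  ∑' n : ℕ, poch a1 n * poch a2 n / (poch b1 n * poch b2 n) * z ^ n / (n.factorial : ℂ)


/-! Each factor of `(a)_k / (c)_k` is `(a + m) / (c + m) = 1 + (a - c) / (c + m)` with
`‖c + m‖ ≥ const · (m + 1)`, so its modulus is at most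
`((m + 2) / (m + 1)) ^ Re (a - c) · exp (E (1 / (m + 1) - 1 / (m + 2)))`. These bounds telescope:
`‖(a)_k / (c)_k‖ ≤ C (k + 1) ^ Re (a - c)`, and for the shifted pair `b + n, d + n` one gets
`((n + k + 1) / (n + 1)) ^ Re (b - d) ≤ (k + 1) ^ max 0 (Re (b - d))` uniformly in `n`.
Hence `‖₂F₂‖ ≤ C ∑ (k + 1) ^ p z ^ k / k!`, and this Poisson-type sum is
`O (z ^ p e ^ z)`: for `p ≥ 0` by `x ^ p ≤ e ^ (p (x - 1))`, for `p < 0` because the terms with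
`k + 1 < z / e` contribute only `O (e ^ (2 z / e))`. -/

open Filter Finset
open scoped Nat

lemma norm_one_add_le_exp (w : ℂ) : ‖1 + w‖ ≤ Real.exp (w.re + ‖w‖ ^ 2 / 2) := by
  have hsq : ‖1 + w‖ ^ 2 = 1 + (2 * w.re + ‖w‖ ^ 2) := by
    rw [Complex.sq_norm, Complex.sq_norm, Complex.normSq_apply, Complex.normSq_apply]
    simp only [Complex.add_re, Complex.one_re, Complex.add_im, Complex.one_im]
    ring
  have hexp : Real.exp (2 * w.re + ‖w‖ ^ 2) = Real.exp (w.re + ‖w‖ ^ 2 / 2) ^ 2 := by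
    rw [← Real.exp_nat_mul]; ring_nf
  rw [← pow_le_pow_iff_left₀ (norm_nonneg _) (Real.exp_pos _).le two_ne_zero, hsq, ← hexp]
  exact Real.add_one_le_exp _ |>.trans_eq' (add_comm _ _)

lemma exists_pos_forall_le_of_eventually {f : ℕ → ℝ} (hf : ∀ m, 0 < f m) {c : ℝ}
    (hc : 0 < c) (h : ∀ᶠ m in atTop, c ≤ f m) : ∃ c' > 0, ∀ m, c' ≤ f m := by
  obtain ⟨N, hN⟩ := eventually_atTop.mp h
  let s := insert c ((range N).image f)
  refine ⟨s.inf' (insert_nonempty _ _) id, ?_, fun m => ?_⟩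
  · rw [gt_iff_lt, lt_inf'_iff]
    simp only [s, mem_insert, mem_image, id]
    rintro _ (rfl | ⟨m, -, rfl⟩)
    exacts [hc, hf m]
  · rcases lt_or_ge m N with hm | hm
    · exact inf'_le _ (mem_insert_of_mem (mem_image_of_mem f (mem_range.mpr hm)))
    · exact (inf'_le _ (mem_insert_self c _)).trans (hN m hm)

lemma exists_pos_mul_le_norm_add_natCast {v : ℂ} (hv : ∀ m : ℕ, v ≠ -m) :
    ∃ c > 0, ∀ m : ℕ, c * (m + 1) ≤ ‖v + m‖ := by
  have hpos (m : ℕ) : 0 < ‖v + m‖ / (m + 1) :=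
    div_pos (norm_pos_iff.mpr fun h => hv m (eq_neg_of_add_eq_zero_left h)) (by positivity)
  have hlarge : ∀ᶠ m : ℕ in atTop, 1 / 2 ≤ ‖v + m‖ / (m + 1) := by
    filter_upwards [eventually_ge_atTop ⌈2 * ‖v‖ + 1⌉₊] with m hm
    have hm' := Nat.ceil_le.mp hm
    have htri := norm_sub_le (v + m) v
    rw [add_sub_cancel_left, Complex.norm_natCast] at htri
    rw [le_div_iff₀ (by positivity)]
    linarith
  obtain ⟨c, hc, hcf⟩ := exists_pos_forall_le_of_eventually hpos one_half_pos hlarge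
  exact ⟨c, hc, fun m => (le_div_iff₀ (by positivity)).mp (hcf m)⟩

lemma log_add_one_sub_log_bounds {x : ℝ} (hx : 0 < x) :
    1 / (x + 1) ≤ Real.log (x + 1) - Real.log x ∧ Real.log (x + 1) - Real.log x ≤ 1 / x := by
  rw [← Real.log_div (by positivity) hx.ne']
  constructor
  · have := Real.one_sub_inv_le_log_of_pos (show 0 < (x + 1) / x by positivity)
    convert this using 1
    field_simp
    ring
  · have := Real.log_le_sub_one_of_pos (show 0 < (x + 1) / x by positivity)
    convert this using 1
    field_simp
    ring

lemma div_le_mul_log_add_one_sub_log (σ : ℝ) {x : ℝ} (hx : 0 < x) :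
    σ / x ≤ σ * (Real.log (x + 1) - Real.log x) + |σ| * (1 / x - 1 / (x + 1)) := by
  obtain ⟨hlo, hhi⟩ := log_add_one_sub_log_bounds hx
  rcases le_or_gt 0 σ with h | h
  · rw [abs_of_nonneg h]
    linear_combination mul_le_mul_of_nonneg_left hlo h
  · have hT : 0 ≤ 1 / x - 1 / (x + 1) := by linarith
    rw [abs_of_neg h]
    linear_combination mul_le_mul_of_nonpos_left hhi h.le + mul_nonneg (neg_nonneg.mpr h.le) hT

lemma exists_norm_add_natCast_le (u : ℂ) {v : ℂ} (hv : ∀ m : ℕ, v ≠ -m) :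
    ∃ E ≥ 0, ∀ m : ℕ, ‖u + m‖ ≤ ‖v + m‖ * Real.exp ((u - v).re *
      (Real.log (m + 2) - Real.log (m + 1)) + E * (1 / (m + 1) - 1 / (m + 2))) := by
  obtain ⟨c, hc, hcv⟩ := exists_pos_mul_le_norm_add_natCast hv
  set δ := u - v
  set A := ‖δ‖ * ‖1 - v‖ / c
  set B := ‖δ‖ / c
  refine ⟨2 * A + B ^ 2 + |δ.re|, by positivity, fun m => ?_⟩
  set x : ℝ := m + 1 with hx_def
  have hx : 1 ≤ x := by simp [x]
  rw [show (m : ℝ) + 2 = x + 1 by ring]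
  set T := 1 / x - 1 / (x + 1)
  have hvm : c * x ≤ ‖v + m‖ := hcv m
  have hvm0 : v + m ≠ 0 := norm_pos_iff.mp ((by positivity : 0 < c * x).trans_le hvm)
  set w := δ / (v + m)
  have hsplit : u + m = (v + m) * (1 + w) := by
    simp only [w, δ]; field_simp; ring
  have hw : ‖w‖ ^ 2 ≤ B ^ 2 * (1 / x ^ 2) := by
    rw [mul_one_div, ← div_pow, div_div, norm_div]
    gcongr
  have hre : w.re ≤ δ.re / x + A * (1 / x ^ 2) := by
    have hdiff : w - δ / (x : ℂ) = δ * (1 - v) / ((v + m) * x) := by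
      simp only [w, hx_def]; push_cast; field_simp; ring
    have hdiff_norm : ‖w - δ / (x : ℂ)‖ ≤ A * (1 / x ^ 2) := by
      rw [hdiff, norm_div, norm_mul, norm_mul, Complex.norm_real,
        Real.norm_of_nonneg (by positivity), mul_one_div, div_div, pow_two, ← mul_assoc]
      gcongr
    have := Complex.re_le_norm (w - δ / (x : ℂ))
    rw [Complex.sub_re, Complex.div_ofReal_re] at this
    linarith
  have hσ := div_le_mul_log_add_one_sub_log δ.re (by positivity : 0 < x)
  have hsq : 1 / x ^ 2 ≤ 2 * T := by
    rw [show T = 1 / (x * (x + 1)) by simp only [T]; field_simp; ring]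
    rw [div_le_iff₀ (by positivity)]
    field_simp
    linarith
  rw [hsplit, norm_mul]
  gcongr
  refine (norm_one_add_le_exp w).trans (Real.exp_le_exp.mpr ?_)
  have hAB : 0 ≤ A + B ^ 2 / 2 := by positivity
  linear_combination hre + hw / 2 + hσ + mul_le_mul_of_nonneg_left hsq hAB

lemma exists_norm_poch_add_le (u : ℂ) {v : ℂ} (hv : ∀ m : ℕ, v ≠ -m) :
    ∃ C > 0, ∀ n k : ℕ,
      ‖poch (u + n) k‖ ≤
        C * (((n : ℝ) + k + 1) / (n + 1)) ^ (u - v).re * ‖poch (v + n) k‖ := by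
  obtain ⟨E, hE, hfactor⟩ := exists_norm_add_natCast_le u hv
  set σ := (u - v).re
  -- the exponent in `hfactor` is `ψ (m + 1) - ψ m`, so it telescopes along a Pochhammer product
  let ψ : ℕ → ℝ := fun m => σ * Real.log (m + 1) - E / (m + 1)
  refine ⟨Real.exp E, Real.exp_pos E, fun n k => ?_⟩
  have hstep (m : ℕ) : ‖u + m‖ ≤ ‖v + m‖ * Real.exp (ψ (m + 1) - ψ m) := by
    convert hfactor m using 3
    simp only [ψ, Nat.cast_add, Nat.cast_one, add_assoc, one_add_one_eq_two]
    ring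
  have hψ : ψ (n + k) - ψ n ≤ E + Real.log ((n + k + 1) / (n + 1)) * σ := by
    rw [Real.log_div (by positivity) (by positivity)]
    simp only [ψ]
    push_cast
    have : E / (n + 1) ≤ E := div_le_self hE (by simp)
    have : 0 ≤ E / (n + k + 1) := by positivity
    linarith
  calc ‖poch (u + n) k‖
      ≤ ∏ j ∈ range k, (‖v + n + j‖ * Real.exp (ψ (n + (j + 1)) - ψ (n + j))) := by
        rw [poch, norm_prod]
        refine prod_le_prod (fun _ _ => norm_nonneg _) fun j _ => ?_
        simpa only [Nat.cast_add, add_assoc] using hstep (n + j)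
    _ = Real.exp (ψ (n + k) - ψ n) * ‖poch (v + n) k‖ := by
        rw [prod_mul_distrib, ← Real.exp_sum, sum_range_sub (fun j => ψ (n + j)), poch,
          norm_prod, add_zero, mul_comm]
    _ ≤ Real.exp E * ((n + k + 1) / (n + 1)) ^ σ * ‖poch (v + n) k‖ := by
        rw [Real.rpow_def_of_pos (by positivity), ← Real.exp_add]
        gcongr

lemma exists_norm_poch_div_le (u : ℂ) {v : ℂ} (hv : ∀ m : ℕ, v ≠ -m) :
    ∃ C > 0, ∀ k : ℕ, ‖poch u k / poch v k‖ ≤ C * ((k : ℝ) + 1) ^ (u - v).re := by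
  obtain ⟨C, hC, h⟩ := exists_norm_poch_add_le u hv
  refine ⟨C, hC, fun k => ?_⟩
  have h0 := h 0 k
  simp only [Nat.cast_zero, add_zero, zero_add, div_one] at h0
  rw [norm_div]
  exact div_le_of_le_mul₀ (norm_nonneg _) (by positivity) h0

lemma exists_norm_poch_add_div_le (u : ℂ) {v : ℂ} (hv : ∀ m : ℕ, v ≠ -m) :
    ∃ C > 0, ∀ n k : ℕ,
      ‖poch (u + n) k / poch (v + n) k‖ ≤ C * ((k : ℝ) + 1) ^ max 0 (u - v).re := by
  obtain ⟨C, hC, h⟩ := exists_norm_poch_add_le u hv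
  refine ⟨C, hC, fun n k => ?_⟩
  set y : ℝ := (n + k + 1) / (n + 1)
  have hk : (0 : ℝ) ≤ k := k.cast_nonneg
  have hy1 : 1 ≤ y := by rw [le_div_iff₀ (by positivity)]; linarith
  have hyk : y ≤ k + 1 := by
    rw [div_le_iff₀ (by positivity)]; nlinarith [(n.cast_nonneg : (0 : ℝ) ≤ n)]
  have hpow : y ^ (u - v).re ≤ ((k : ℝ) + 1) ^ max 0 (u - v).re :=
    (Real.rpow_le_rpow_of_exponent_le hy1 (le_max_right _ _)).trans
      (Real.rpow_le_rpow (by positivity) hyk (le_max_left _ _))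
  rw [norm_div]
  refine div_le_of_le_mul₀ (norm_nonneg _) (by positivity) ((h n k).trans ?_)
  gcongr

lemma Real.hasSum_pow_div_factorial (x : ℝ) :
    HasSum (fun k : ℕ => x ^ k / k !) (Real.exp x) := by
  rw [Real.exp_eq_exp_ℝ]
  exact NormedSpace.expSeries_div_hasSum_exp x

lemma summable_rpow_mul_pow_div_factorial (p : ℝ) {z : ℝ} (hz : 0 ≤ z) :
    Summable fun k : ℕ => ((k : ℝ) + 1) ^ p * z ^ k / k ! := by
  refine .of_nonneg_of_le (fun k => by positivity) (fun k => ?_)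
    (Real.summable_pow_div_factorial (Real.exp |p| * z))
  have hk : (1 : ℝ) ≤ k + 1 := by simp
  have hpow : ((k : ℝ) + 1) ^ p ≤ Real.exp |p| ^ k :=
    calc ((k : ℝ) + 1) ^ p ≤ ((k : ℝ) + 1) ^ |p| :=
          Real.rpow_le_rpow_of_exponent_le hk (le_abs_self p)
      _ ≤ Real.exp k ^ |p| := by gcongr; exact Real.add_one_le_exp k
      _ = Real.exp |p| ^ k := by rw [← Real.exp_mul, ← Real.exp_nat_mul, mul_comm]
  rw [mul_pow]
  gcongr

lemma tsum_rpow_mul_pow_div_factorial_le_of_nonneg {p z : ℝ} (hp : 0 ≤ p) (hz : 1 ≤ z) :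
    ∑' k : ℕ, ((k : ℝ) + 1) ^ p * z ^ k / k ! ≤
      Real.exp (p * Real.exp p) * z ^ p * Real.exp z := by
  have hz0 : 0 < z := one_pos.trans_le hz
  have hpz : p / z ≤ p := div_le_self hp hz
  set q := Real.exp (p / z)
  -- `x ^ p ≤ exp (p (x - 1))` at `x = (k + 1) / z`
  have hterm (k : ℕ) : ((k : ℝ) + 1) ^ p * z ^ k / k ! ≤
      z ^ p * Real.exp (p / z - p) * ((q * z) ^ k / k !) := by
    have hx : ((k : ℝ) + 1) / z ≤ Real.exp ((k + 1) / z - 1) := by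
      linarith [Real.add_one_le_exp ((k + 1) / z - 1)]
    have hpow : ((k : ℝ) + 1) ^ p ≤ z ^ p * (Real.exp (p / z - p) * q ^ k) := by
      calc ((k : ℝ) + 1) ^ p = z ^ p * (((k : ℝ) + 1) / z) ^ p := by
            rw [Real.div_rpow (by positivity) hz0.le, mul_div_cancel₀ _ (by positivity)]
        _ ≤ z ^ p * Real.exp ((k + 1) / z - 1) ^ p := by gcongr
        _ = z ^ p * (Real.exp (p / z - p) * q ^ k) := by
            rw [← Real.exp_mul, ← Real.exp_nat_mul, ← Real.exp_add]
            congr 2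
            field_simp
            ring
    calc ((k : ℝ) + 1) ^ p * z ^ k / k !
        ≤ z ^ p * (Real.exp (p / z - p) * q ^ k) * z ^ k / k ! := by gcongr
      _ = _ := by ring
  have hq : q * z ≤ z + p * Real.exp p := by
    have hexp : q ≤ 1 + p / z * q := by
      have h := Real.one_sub_le_exp_neg (p / z)
      rw [Real.exp_neg] at h
      have := mul_le_mul_of_nonneg_right h (Real.exp_pos (p / z)).le
      rw [inv_mul_cancel₀ (Real.exp_pos _).ne'] at this
      linarith
    calc q * z ≤ (1 + p / z * q) * z := by gcongr
      _ = z + p * q := by field_simp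
      _ ≤ z + p * Real.exp p := by gcongr; exact Real.exp_le_exp.mpr hpz
  calc ∑' k : ℕ, ((k : ℝ) + 1) ^ p * z ^ k / k !
      ≤ ∑' k : ℕ, z ^ p * Real.exp (p / z - p) * ((q * z) ^ k / k !) :=
        (summable_rpow_mul_pow_div_factorial p hz0.le).tsum_le_tsum hterm
          ((Real.summable_pow_div_factorial _).mul_left _)
    _ = z ^ p * Real.exp (p / z - p) * Real.exp (q * z) := by
        rw [tsum_mul_left, (Real.hasSum_pow_div_factorial _).tsum_eq]
    _ ≤ z ^ p * 1 * Real.exp (z + p * Real.exp p) := by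
        gcongr
        rw [Real.exp_le_one_iff]
        linarith
    _ = Real.exp (p * Real.exp p) * z ^ p * Real.exp z := by rw [Real.exp_add]; ring

lemma tsum_rpow_mul_pow_div_factorial_le_of_nonpos {p z : ℝ} (hp : p ≤ 0) (hz : 0 < z) :
    ∑' k : ℕ, ((k : ℝ) + 1) ^ p * z ^ k / k ! ≤
      Real.exp (-p) * z ^ p * Real.exp z + Real.exp (2 * z / Real.exp 1) := by
  set y := z / Real.exp 1
  -- split at `k + 1 = y`: above it `(k + 1) ^ p ≤ y ^ p`,
  -- below it `z ^ k = e ^ k y ^ k ≤ e ^ y y ^ k`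
  have hterm (k : ℕ) : ((k : ℝ) + 1) ^ p * z ^ k / k ! ≤
      y ^ p * (z ^ k / k !) + Real.exp y * (y ^ k / k !) := by
    rcases le_or_gt y (k + 1) with hk | hk
    · have : ((k : ℝ) + 1) ^ p ≤ y ^ p := Real.rpow_le_rpow_of_nonpos (by positivity) hk hp
      calc ((k : ℝ) + 1) ^ p * z ^ k / k ! ≤ y ^ p * (z ^ k / k !) := by
            rw [mul_div_assoc]; gcongr
        _ ≤ _ := le_add_of_nonneg_right (by positivity)
    · have h1 : ((k : ℝ) + 1) ^ p ≤ 1 := Real.rpow_le_one_of_one_le_of_nonpos (by simp) hp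
      have hzk : z ^ k = Real.exp k * y ^ k := by
        rw [← Real.exp_one_pow, ← mul_pow, mul_div_cancel₀ _ (Real.exp_pos 1).ne']
      calc ((k : ℝ) + 1) ^ p * z ^ k / k ! ≤ 1 * (Real.exp k * (y ^ k / k !)) := by
            rw [mul_div_assoc, hzk, mul_div_assoc]; gcongr
        _ ≤ Real.exp y * (y ^ k / k !) := by rw [one_mul]; gcongr; linarith
        _ ≤ _ := le_add_of_nonneg_left (by positivity)
  calc ∑' k : ℕ, ((k : ℝ) + 1) ^ p * z ^ k / k !
      ≤ ∑' k : ℕ, (y ^ p * (z ^ k / k !) + Real.exp y * (y ^ k / k !)) :=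
        (summable_rpow_mul_pow_div_factorial p hz.le).tsum_le_tsum hterm
          (((Real.summable_pow_div_factorial _).mul_left _).add
            ((Real.summable_pow_div_factorial _).mul_left _))
    _ = y ^ p * Real.exp z + Real.exp y * Real.exp y :=
        (((Real.hasSum_pow_div_factorial z).mul_left _).add
          ((Real.hasSum_pow_div_factorial y).mul_left _)).tsum_eq
    _ = Real.exp (-p) * z ^ p * Real.exp z + Real.exp (2 * z / Real.exp 1) := by
        rw [Real.div_rpow hz.le (Real.exp_pos 1).le, Real.exp_one_rpow, ← Real.exp_add,
          Real.exp_neg]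
        simp only [y]
        ring_nf

lemma exists_tsum_rpow_mul_pow_div_factorial_le (p : ℝ) :
    ∃ C > 0, ∃ z₁ > 0, ∀ z ≥ z₁,
      ∑' k : ℕ, ((k : ℝ) + 1) ^ p * z ^ k / k ! ≤ C * z ^ p * Real.exp z := by
  rcases le_or_gt 0 p with hp | hp
  · exact ⟨_, Real.exp_pos _, 1, one_pos,
      fun z hz => tsum_rpow_mul_pow_div_factorial_le_of_nonneg hp hz⟩
  set b := 1 - 2 / Real.exp 1
  have hb : 0 < b := by
    have := Real.exp_one_gt_d9
    rw [sub_pos, div_lt_one (by positivity)]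
    linarith
  obtain ⟨z₁, hz₁⟩ := eventually_atTop.mp
    ((tendsto_rpow_mul_exp_neg_mul_atTop_nhds_zero (-p) b hb).eventually_le_const one_pos)
  refine ⟨Real.exp (-p) + 1, by positivity, max z₁ 1, by positivity, fun z hz => ?_⟩
  have hz0 : 0 < z := one_pos.trans_le ((le_max_right _ _).trans hz)
  -- eventually `z ^ (-p) ≤ exp (b z)`, which absorbs the second term
  have hsmall : Real.exp (2 * z / Real.exp 1) ≤ z ^ p * Real.exp z := by
    have h := hz₁ z ((le_max_left _ _).trans hz)
    rw [Real.rpow_neg hz0.le, inv_mul_le_iff₀ (by positivity), mul_one] at h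
    calc Real.exp (2 * z / Real.exp 1) = Real.exp (-b * z) * Real.exp z := by
          rw [← Real.exp_add]; congr 1; ring
      _ ≤ z ^ p * Real.exp z := by gcongr
  calc ∑' k : ℕ, ((k : ℝ) + 1) ^ p * z ^ k / k !
      ≤ Real.exp (-p) * z ^ p * Real.exp z + Real.exp (2 * z / Real.exp 1) :=
        tsum_rpow_mul_pow_div_factorial_le_of_nonpos hp.le hz0
    _ ≤ (Real.exp (-p) + 1) * z ^ p * Real.exp z := by linarith

lemma norm_F22_le {a₁ a₂ b₁ b₂ : ℂ} {M q z : ℝ} (hz : 0 ≤ z)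
    (h : ∀ k : ℕ,
      ‖poch a₁ k / poch b₁ k‖ * ‖poch a₂ k / poch b₂ k‖ ≤ M * ((k : ℝ) + 1) ^ q) :
    ‖F22 a₁ a₂ b₁ b₂ z‖ ≤ M * ∑' k : ℕ, ((k : ℝ) + 1) ^ q * z ^ k / k ! := by
  rw [← tsum_mul_left]
  refine tsum_of_norm_bounded ((summable_rpow_mul_pow_div_factorial q hz).mul_left M).hasSum
    fun k => ?_
  rw [mul_div_mul_comm, norm_div, norm_mul, norm_mul, norm_pow, Complex.norm_real,
    Real.norm_of_nonneg hz, Complex.norm_natCast, mul_div_assoc, mul_div_assoc]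
  calc ‖poch a₁ k / poch b₁ k‖ * ‖poch a₂ k / poch b₂ k‖ * (z ^ k / k !)
      ≤ M * ((k : ℝ) + 1) ^ q * (z ^ k / k !) :=
        mul_le_mul_of_nonneg_right (h k) (by positivity)
    _ = _ := by ring

theorem stmt9 (a b c d : ℂ)
    (hc : ∀ m : ℕ, c ≠ -(m : ℂ)) (hd : ∀ m : ℕ, d ≠ -(m : ℂ))
    (p : ℝ) (hp : p = (a - c).re + max 0 (b - d).re) :
    ∃ K > (0 : ℝ), ∃ z₀ > (0 : ℝ), ∀ (n : ℕ) (z : ℝ), z₀ ≤ z →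
      ‖F22 a (b + n) c (d + n) (z : ℂ)‖ ≤
        K * ((n : ℝ) + 1) ^ (2 * ‖b - d‖) * z ^ p * Real.exp z := by
  obtain ⟨C₁, hC₁, hac⟩ := exists_norm_poch_div_le a hc
  obtain ⟨C₂, hC₂, hbd⟩ := exists_norm_poch_add_div_le b hd
  obtain ⟨C₃, hC₃, z₁, hz₁, hsum⟩ := exists_tsum_rpow_mul_pow_div_factorial_le p
  refine ⟨C₁ * C₂ * C₃, by positivity, z₁, hz₁, fun n z hz => ?_⟩
  have hz0 : 0 < z := hz₁.trans_le hz
  have hratio (k : ℕ) : ‖poch a k / poch c k‖ * ‖poch (b + n) k / poch (d + n) k‖ ≤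
      C₁ * C₂ * ((k : ℝ) + 1) ^ p := by
    rw [hp, Real.rpow_add (by positivity)]
    calc _ ≤ C₁ * ((k : ℝ) + 1) ^ (a - c).re * (C₂ * ((k : ℝ) + 1) ^ max 0 (b - d).re) :=
          mul_le_mul (hac k) (hbd n k) (norm_nonneg _) (by positivity)
      _ = _ := by ring
  have hn : 1 ≤ ((n : ℝ) + 1) ^ (2 * ‖b - d‖) := Real.one_le_rpow (by simp) (by positivity)
  calc ‖F22 a (b + n) c (d + n) z‖
      ≤ C₁ * C₂ * ∑' k : ℕ, ((k : ℝ) + 1) ^ p * z ^ k / k ! :=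
        norm_F22_le hz0.le hratio
    _ ≤ C₁ * C₂ * (C₃ * z ^ p * Real.exp z) := by gcongr; exact hsum z hz
    _ = C₁ * C₂ * C₃ * 1 * z ^ p * Real.exp z := by ring
    _ ≤ C₁ * C₂ * C₃ * ((n : ℝ) + 1) ^ (2 * ‖b - d‖) * z ^ p * Real.exp z := by gcongr
end

section
/- Assume a, b, c ∈ ℂ, c' ∈ ℂ∖ℤ_{≤0}, and a−b ∈ ℂ∖ℤ. Then for all reals γ₂ > 0 and ρ > 1 there exists a constant C > 0 such that for every x ∈ ℂ with |x−1| ≥ ρ and every y ∈ ℂ with |y/(1−x)| ≤ γ₂, the series V₁(x,y) converges absolutely and |V₁(x,y)| ≤ C. -/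
open Complex

/-- `n`-th term of the series `V₁(x,y)`. -/
noncomputable def V1term (a b c c' x y : ℂ) (n : ℕ) : ℂ :=
  poch a n * poch (c - b) n / (poch (a - b + 1) n * (n.factorial : ℂ)) *
    F22 (a - c + 1) (a + n) c' (a - b + 1 + n) (y / (1 - x)) * (1 - x) ^ (-(n : ℂ))

noncomputable def V1 (a b c c' x y : ℂ) : ℂ := ∑' n : ℕ, V1term a b c c' x y n

/-! The key estimate is that `w + j` stays a positive multiple of `j + 1` away from `0` when
`w ∉ ℤ_{≤0}`. Comparing Pochhammer symbols factor by factor then gives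
`‖(u)_n‖ ≤ (n+1)^U ‖(v)_n‖` and `‖(u)_m‖ ≤ K^m ‖(v)_m‖`, with `K` independent of a common
integer shift of `u` and `v`. Hence the inner `₂F₂` is bounded by `exp (R γ₂)` uniformly in `n`,
the outer coefficient grows polynomially in `n`, and `|1 - x|^{-n} ≤ ρ^{-n}` dominates `V₁` by the
convergent series `∑ (n+1)^N ρ^{-n}`. -/

open Filter Finset

lemma exists_pos_forall_le_of_eventually_le {f : ℕ → ℝ} (hf : ∀ n, 0 < f n) {δ : ℝ}
    (hδ : 0 < δ) (h : ∀ᶠ n in atTop, δ ≤ f n) : ∃ ε > 0, ∀ n, ε ≤ f n := by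
  obtain ⟨N, hN⟩ := eventually_atTop.1 h
  obtain ⟨n₀, -, hn₀⟩ := (range (N + 1)).exists_min_image f ⟨0, by simp⟩
  refine ⟨min δ (f n₀), lt_min hδ (hf n₀), fun n => ?_⟩
  rcases lt_or_ge n N with hn | hn
  · exact (min_le_right _ _).trans (hn₀ n (mem_range.2 (by omega)))
  · exact (min_le_left _ _).trans (hN n hn)

lemma exists_pos_mul_le_norm_add_natCast_s10 {w : ℂ} (hw : ∀ j : ℕ, w + j ≠ 0) :
    ∃ ε > 0, ∀ j : ℕ, ε * (j + 1) ≤ ‖w + j‖ := by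
  have hfar : ∀ᶠ j : ℕ in atTop, 1 / 2 ≤ ‖w + j‖ / (j + 1) := by
    filter_upwards [tendsto_natCast_atTop_atTop.eventually_ge_atTop (2 * ‖w‖ + 1)] with j hj
    rw [le_div_iff₀ (by positivity)]
    have : (j : ℝ) ≤ ‖w + j‖ + ‖w‖ := by simpa using norm_le_norm_add_norm_sub' (j : ℂ) (w + j)
    linarith
  obtain ⟨ε, hε, hle⟩ := exists_pos_forall_le_of_eventually_le
    (fun j => div_pos (norm_pos_iff.2 (hw j)) (by positivity)) one_half_pos hfar
  exact ⟨ε, hε, fun j => (le_div_iff₀ (by positivity)).1 (hle j)⟩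

lemma norm_le_one_add_div_mul {E : Type*} [SeminormedAddCommGroup E] {z w : E} {ε : ℝ}
    (hε : 0 < ε) (hw : ε ≤ ‖w‖) : ‖z‖ ≤ (1 + ‖z - w‖ / ε) * ‖w‖ := by
  have : ‖z - w‖ ≤ ‖z - w‖ / ε * ‖w‖ := by
    rw [div_mul_eq_mul_div, le_div_iff₀ hε]; exact mul_le_mul_of_nonneg_left hw (norm_nonneg _)
  linarith [norm_le_norm_add_norm_sub' z w]

lemma norm_mul_div_mul_le {K : Type*} [NormedField K] {A A' B B' : K} {X Y : ℝ}
    (hX : 0 ≤ X) (hY : 0 ≤ Y) (hA : ‖A‖ ≤ X * ‖B‖) (hA' : ‖A'‖ ≤ Y * ‖B'‖) :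
    ‖A * A' / (B * B')‖ ≤ X * Y := by
  rw [norm_div, norm_mul, norm_mul]
  refine div_le_of_le_mul₀ (by positivity) (by positivity) ?_
  calc ‖A‖ * ‖A'‖ ≤ X * ‖B‖ * (Y * ‖B'‖) := by gcongr
    _ = X * Y * (‖B‖ * ‖B'‖) := by ring

lemma poch_one (n : ℕ) : poch 1 n = n.factorial := by
  simp [poch, ← prod_range_add_one_eq_factorial, add_comm]

lemma norm_poch_le_prod_mul {u v : ℂ} {r : ℕ → ℝ} (h : ∀ j : ℕ, ‖u + j‖ ≤ r j * ‖v + j‖)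
    (n : ℕ) : ‖poch u n‖ ≤ (∏ j ∈ range n, r j) * ‖poch v n‖ := by
  simp only [poch, norm_prod, ← prod_mul_distrib]
  exact prod_le_prod (fun _ _ => norm_nonneg _) fun j _ => h j

lemma norm_poch_le_pow_mul {u v : ℂ} {ε : ℝ} (hε : 0 < ε) (hv : ∀ j : ℕ, ε ≤ ‖v + j‖) (n : ℕ) :
    ‖poch u n‖ ≤ (1 + ‖u - v‖ / ε) ^ n * ‖poch v n‖ := by
  have h := norm_poch_le_prod_mul (fun j => by
    simpa using norm_le_one_add_div_mul (z := u + j) hε (hv j)) n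
  rwa [prod_const, card_range] at h

lemma prod_range_add_two_div_add_one (n : ℕ) :
    ∏ j ∈ range n, ((j + 2 : ℝ) / (j + 1)) = n + 1 := by
  induction n with
  | zero => simp
  | succ n ih =>
    rw [prod_range_succ, ih]
    push_cast
    field_simp
    ring

lemma one_add_div_le_add_two_div_add_one_pow {t : ℝ} {U : ℕ} (ht : t ≤ U) (j : ℕ) :
    1 + t / (j + 1) ≤ ((j + 2 : ℝ) / (j + 1)) ^ U := by
  have hj : (0 : ℝ) < j + 1 := by positivity
  calc 1 + t / (j + 1) ≤ 1 + U * (1 / (j + 1)) := by rw [mul_one_div]; gcongr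
    _ ≤ (1 + 1 / (j + 1)) ^ U := one_add_mul_le_pow (by linarith [one_div_pos.2 hj]) U
    _ = ((j + 2 : ℝ) / (j + 1)) ^ U := by congr 1; field_simp; ring

lemma norm_poch_le_add_one_pow_mul {u v : ℂ} {ε : ℝ} (hε : 0 < ε)
    (hv : ∀ j : ℕ, ε * (j + 1) ≤ ‖v + j‖) {U : ℕ} (hU : ‖u - v‖ / ε ≤ U) (n : ℕ) :
    ‖poch u n‖ ≤ (n + 1) ^ U * ‖poch v n‖ := by
  have hj : ∀ j : ℕ, ‖u + j‖ ≤ ((j + 2 : ℝ) / (j + 1)) ^ U * ‖v + j‖ := fun j => by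
    have hεj : 0 < ε * (j + 1) := by positivity
    calc ‖u + j‖ ≤ (1 + ‖u - v‖ / ε / (j + 1)) * ‖v + j‖ := by
          simpa [div_div] using norm_le_one_add_div_mul (z := u + j) hεj (hv j)
      _ ≤ _ := by gcongr; exact one_add_div_le_add_two_div_add_one_pow hU j
  have h := norm_poch_le_prod_mul hj n
  rwa [prod_pow, prod_range_add_two_div_add_one] at h

lemma norm_F22_le_exp {a1 a2 b1 b2 z : ℂ} {R : ℝ}
    (h : ∀ m : ℕ, ‖poch a1 m * poch a2 m / (poch b1 m * poch b2 m)‖ ≤ R ^ m) :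
    ‖F22 a1 a2 b1 b2 z‖ ≤ Real.exp (R * ‖z‖) := by
  have hterm : ∀ m : ℕ, ‖poch a1 m * poch a2 m / (poch b1 m * poch b2 m) * z ^ m / m.factorial‖
      ≤ (R * ‖z‖) ^ m / m.factorial := fun m => by
    rw [norm_div, norm_mul, norm_pow, Complex.norm_natCast, mul_pow]
    gcongr
    exact h m
  have hexp : HasSum (fun m : ℕ => (R * ‖z‖) ^ m / m.factorial) (Real.exp (R * ‖z‖)) := by
    rw [Real.exp_eq_exp_ℝ]; exact NormedSpace.expSeries_div_hasSum_exp _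
  exact tsum_of_norm_bounded hexp hterm

lemma summable_add_one_pow_mul_geometric {r : ℝ} (hr0 : 0 < r) (hr : r < 1) (N : ℕ) :
    Summable fun n : ℕ => ((n : ℝ) + 1) ^ N * r ^ n := by
  have h := (summable_nat_add_iff (f := fun n : ℕ => (n : ℝ) ^ N * r ^ n) 1).2 <|
    summable_pow_mul_geometric_of_norm_lt_one N <| by rwa [Real.norm_of_nonneg hr0.le]
  refine (h.mul_left r⁻¹).congr fun n => ?_
  rw [pow_succ, Nat.cast_add_one]
  field_simp

lemma norm_one_sub_cpow_neg_natCast (x : ℂ) (n : ℕ) :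
    ‖(1 - x) ^ (-(n : ℂ))‖ = ‖1 - x‖⁻¹ ^ n := by
  rw [cpow_neg, cpow_natCast, norm_inv, norm_pow, inv_pow]

lemma exists_norm_V1coeff_le {a b c : ℂ} (hab : ∀ j : ℕ, a - b + 1 + j ≠ 0) :
    ∃ N : ℕ, ∀ n : ℕ,
      ‖poch a n * poch (c - b) n / (poch (a - b + 1) n * n.factorial)‖ ≤ (n + 1) ^ N := by
  obtain ⟨ε, hε, hab⟩ := exists_pos_mul_le_norm_add_natCast_s10 hab
  have hone : ∀ j : ℕ, 1 * ((j : ℝ) + 1) ≤ ‖(1 : ℂ) + j‖ := fun j => by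
    rw [one_mul, add_comm (1 : ℂ), ← Nat.cast_add_one (R := ℂ), norm_natCast, Nat.cast_add_one]
  refine ⟨⌈‖a - 1‖⌉₊ + ⌈‖c - b - (a - b + 1)‖ / ε⌉₊, fun n => ?_⟩
  rw [mul_comm (poch (a - b + 1) n), ← poch_one, pow_add]
  exact norm_mul_div_mul_le (by positivity) (by positivity)
    (norm_poch_le_add_one_pow_mul one_pos hone (by rw [div_one]; exact Nat.le_ceil _) n)
    (norm_poch_le_add_one_pow_mul hε hab (Nat.le_ceil _) n)

lemma exists_norm_F22_le {a b c c' : ℂ} (hc' : ∀ j : ℕ, c' + j ≠ 0)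
    (hab : ∀ j : ℕ, a - b + 1 + j ≠ 0) :
    ∃ R ≥ 0, ∀ (n : ℕ) (z : ℂ),
      ‖F22 (a - c + 1) (a + n) c' (a - b + 1 + n) z‖ ≤ Real.exp (R * ‖z‖) := by
  obtain ⟨ε₂, hε₂, hc'⟩ := exists_pos_mul_le_norm_add_natCast_s10 hc'
  obtain ⟨ε₁, hε₁, hab⟩ := exists_pos_mul_le_norm_add_natCast_s10 hab
  refine ⟨(1 + ‖a - c + 1 - c'‖ / ε₂) * (1 + ‖b - 1‖ / ε₁), by positivity, fun n z => ?_⟩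
  have hc'_ge : ∀ j : ℕ, ε₂ ≤ ‖c' + j‖ := fun j =>
    (le_mul_of_one_le_right hε₂.le (by linarith [j.cast_nonneg (α := ℝ)])).trans (hc' j)
  have hab_ge : ∀ j : ℕ, ε₁ ≤ ‖a - b + 1 + n + j‖ := fun j => by
    have h := hab (n + j)
    push_cast [← add_assoc] at h
    exact (le_mul_of_one_le_right hε₁.le (by linarith [(n + j).cast_nonneg (α := ℝ)])).trans h
  have hshift : a + n - (a - b + 1 + n) = b - 1 := by ring
  refine norm_F22_le_exp fun m => ?_
  rw [mul_pow]
  refine norm_mul_div_mul_le (by positivity) (by positivity)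
    (norm_poch_le_pow_mul hε₂ hc'_ge m) ?_
  simpa only [hshift] using norm_poch_le_pow_mul (u := a + n) hε₁ hab_ge m

theorem stmt10_general (a b c c' : ℂ)
    (hc' : ∀ m : ℕ, c' ≠ -(m : ℂ)) (hab : ∀ k : ℤ, a - b ≠ (k : ℂ))
    (γ₂ ρ : ℝ) (hρ : 1 < ρ) :
    ∃ C > (0 : ℝ), ∀ x y : ℂ, ρ ≤ ‖x - 1‖ → ‖y / (1 - x)‖ ≤ γ₂ →
      (Summable fun n : ℕ => ‖V1term a b c c' x y n‖) ∧ ‖V1 a b c c' x y‖ ≤ C := by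
  have hab' : ∀ j : ℕ, a - b + 1 + j ≠ 0 := fun j h =>
    hab (-(j + 1)) (by push_cast; linear_combination h)
  obtain ⟨N, hcoeff⟩ := exists_norm_V1coeff_le (c := c) hab'
  obtain ⟨R, hR, hF⟩ :=
    exists_norm_F22_le (c := c) (fun j h => hc' j (eq_neg_of_add_eq_zero_left h)) hab'
  have hg := (summable_add_one_pow_mul_geometric (inv_pos.2 (one_pos.trans hρ))
    (inv_lt_one_of_one_lt₀ hρ) N).mul_left (Real.exp (R * γ₂))
  refine ⟨_, hg.tsum_pos (fun n => by positivity) 0 (by positivity), fun x y hx hy => ?_⟩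
  have hterm : ∀ n : ℕ, ‖V1term a b c c' x y n‖ ≤ Real.exp (R * γ₂) * ((n + 1) ^ N * ρ⁻¹ ^ n) :=
    fun n => by
      rw [V1term, norm_mul, norm_mul, norm_one_sub_cpow_neg_natCast]
      calc _ ≤ (n + 1) ^ N * Real.exp (R * γ₂) * ρ⁻¹ ^ n := by
            gcongr
            · exact hcoeff n
            · exact (hF n _).trans (by gcongr)
            · rwa [norm_sub_rev]
        _ = _ := by ring
  exact ⟨.of_nonneg_of_le (fun _ => norm_nonneg _) hterm hg, tsum_of_norm_bounded hg.hasSum hterm⟩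

theorem stmt10 (a b c c' : ℂ)
    (hc' : ∀ m : ℕ, c' ≠ -(m : ℂ)) (hab : ∀ k : ℤ, a - b ≠ (k : ℂ))
    (γ₂ ρ : ℝ) (hγ₂ : 0 < γ₂) (hρ : 1 < ρ) :
    ∃ C > (0 : ℝ), ∀ x y : ℂ, ρ ≤ ‖x - 1‖ → ‖y / (1 - x)‖ ≤ γ₂ →
      (Summable fun n : ℕ => ‖V1term a b c c' x y n‖) ∧ ‖V1 a b c c' x y‖ ≤ C :=
  stmt10_general a b c c' hc' hab γ₂ ρ hρ
end
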